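/- Let δ be a power of a prime p and q = δ^m with m ≥ 2. The narrow-sense antiprimitive BCH code C over GF(q) of length q+1, defined as C = {c ∈ GF(q)^{U_{q+1}} : Σ_{u ∈ U_{q+1}} c_u u^i = 0 for all i with 1 ≤ |i| ≤ δ-1}, has dimension q - 2δ + 3 over GF(q). -/

import Mathlib

open scoped BigOperators

/-- The parity-check linear map `c ↦ ∑_{u ∈ U_{q+1}} c_u u^i` for the BCH code,
with coordinates indexed by the group `U` of `(q+1)`-th roots of unity in `GF(q²)`. -/
noncomputable def bchMap (q : ℕ) (F K : Type*) [Field F] [Field K] [Fintype K]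
    [Algebra F K] (i : ℤ) :
    ({x : K // x ^ (q + 1) = 1} → F) →ₗ[F] K :=
  letI : Fintype {x : K // x ^ (q + 1) = 1} := Fintype.ofFinite _
  ∑ u : {x : K // x ^ (q + 1) = 1},
    ((u : K) ^ i) • ((Algebra.linearMap F K).comp (LinearMap.proj u))

/-- The narrow-sense antiprimitive BCH code `C_{(q, q+1, δ, 1)}`:
all vectors `(c_u)_{u ∈ U_{q+1}}` over `GF(q)` with `∑_u c_u u^i = 0` for `1 ≤ |i| ≤ δ-1`. -/
noncomputable def bchCode (q δ : ℕ) (F K : Type*) [Field F] [Field K] [Fintype K]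
    [Algebra F K] : Submodule F ({x : K // x ^ (q + 1) = 1} → F) :=
  ⨅ i ∈ {i : ℤ | 1 ≤ |i| ∧ |i| ≤ (δ : ℤ) - 1}, LinearMap.ker (bchMap q F K i)


/-!
Write `n = δ - 1`. On `U` the Frobenius `x ↦ x ^ q` is inversion, so the conditions for negative
`i` are the `q`-th powers of those for positive `i`, and `C` is the kernel of the `F`-linear
syndrome map `F^U → K^n`, `c ↦ (∑_u c_u u^j)_{1 ≤ j ≤ n}`, whose target has `F`-dimension `2n`.
This map is onto: through the trace form, an `F`-linear functional vanishing on its image is a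
`w ∈ K^n` with `Tr(∑_j w_j u^j) = ∑_j (w_j u^j + w_j^q u^{-j}) = 0` on `U`; multiplied by `u^n`
this is a polynomial of degree at most `2n < q + 1 = |U|` with the `w_j` among its coefficients,
so `w = 0`. Hence `dim C = (q + 1) - 2n = q - 2δ + 3`.
-/

open Polynomial

theorem pow_eq_inv_of_pow_succ_eq_one {G : Type*} [DivisionMonoid G] {x : G} {q : ℕ}
    (h : x ^ (q + 1) = 1) : x ^ q = x⁻¹ :=
  eq_inv_of_mul_eq_one_left (by rw [← pow_succ, h])

theorem exists_isPrimitiveRoot_of_dvd_card_sub_one {K : Type*} [Field K] [Fintype K] {n : ℕ}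
    (hn : n ∣ Fintype.card K - 1) : ∃ ζ : K, IsPrimitiveRoot ζ n := by
  classical
  obtain ⟨g, hg⟩ := IsCyclic.exists_ofOrder_eq_natCard (α := Kˣ)
  rw [Nat.card_eq_fintype_card, Fintype.card_units] at hg
  rw [← hg] at hn
  refine ⟨(g ^ (orderOf g / n) : Kˣ), IsPrimitiveRoot.coe_units_iff.mpr ?_⟩
  have hord : orderOf (g ^ (orderOf g / n)) = n := orderOf_pow_orderOf_div (orderOf_pos g).ne' hn
  simpa only [hord] using IsPrimitiveRoot.orderOf (g ^ (orderOf g / n))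

theorem natCard_pow_eq_one_of_dvd_card_sub_one {K : Type*} [Field K] [Fintype K] {n : ℕ}
    (hn0 : 0 < n) (hn : n ∣ Fintype.card K - 1) : Nat.card {x : K // x ^ n = 1} = n := by
  classical
  obtain ⟨ζ, hζ⟩ := exists_isPrimitiveRoot_of_dvd_card_sub_one hn
  calc Nat.card {x : K // x ^ n = 1} = Nat.card (nthRootsFinset n (1 : K)) :=
        Nat.card_congr (Equiv.subtypeEquivRight fun x => (mem_nthRootsFinset hn0 (1 : K)).symm)
    _ = n := by rw [Nat.card_eq_finsetCard, hζ.card_nthRootsFinset]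

theorem eq_zero_of_forall_sum_pow_eq_zero {R ι : Type*} [CommRing R] [IsDomain R] [Fintype ι]
    {f : ι → R} (hf : Function.Injective f) {n : ℕ} (hn : 2 * n < Fintype.card ι)
    (a b : Fin n → R)
    (h : ∀ i, ∑ j : Fin n, (a j * f i ^ (n + 1 + j) + b j * f i ^ (n - 1 - j)) = 0) :
    a = 0 := by
  set P : R[X] := ∑ j : Fin n, (C (a j) * X ^ (n + 1 + j) + C (b j) * X ^ (n - 1 - j))
  have hdeg : P.natDegree ≤ 2 * n := by
    refine natDegree_sum_le_of_forall_le _ _ fun j _ => natDegree_add_le_of_degree_le ?_ ?_ <;>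
      exact (natDegree_C_mul_X_pow_le _ _).trans (by omega)
  have hP : P = 0 := by
    refine eq_zero_of_natDegree_lt_card_of_eval_eq_zero P hf (fun i => ?_) (by omega)
    simpa [P, eval_finsetSum] using h i
  funext j₀
  have hcoeff : P.coeff (n + 1 + j₀) = a j₀ := by
    simp only [P, finsetSum_coeff, coeff_add, coeff_C_mul_X_pow]
    rw [Finset.sum_eq_single j₀
      (fun j _ hj => by rw [if_neg (by omega), if_neg (by omega), add_zero]) (by simp),
      if_pos rfl, if_neg (by omega), add_zero]
  simpa [hP] using hcoeff.symm

section QuadraticExtension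

variable {F K : Type*} [Field F] [Fintype F] [Field K] [Fintype K] [Algebra F K] {q : ℕ}

theorem finrank_eq_two_of_card (hF : Fintype.card F = q) (hK : Fintype.card K = q ^ 2) :
    Module.finrank F K = 2 := by
  have h := Module.card_eq_pow_finrank (K := F) (V := K)
  rw [hF, hK] at h
  exact Nat.pow_right_injective (hF ▸ Fintype.one_lt_card) h.symm

theorem algebraMap_trace_eq_add_pow (hF : Fintype.card F = q) (hK : Fintype.card K = q ^ 2)
    (x : K) : algebraMap F K (Algebra.trace F K x) = x + x ^ q := by
  rw [FiniteField.algebraMap_trace_eq_sum_pow, finrank_eq_two_of_card hF hK,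
    Nat.card_eq_fintype_card, hF]
  simp [Finset.sum_range_succ]

theorem frobeniusAlgEquivOfAlgebraic_apply_eq_pow (hF : Fintype.card F = q) (x : K) :
    FiniteField.frobeniusAlgEquivOfAlgebraic F K x = x ^ q := by
  rw [FiniteField.frobeniusAlgEquivOfAlgebraic_apply, hF]

end QuadraticExtension

theorem Module.Dual.exists_eq_sum_trace {F K ι : Type*} [Field F] [Field K] [Algebra F K]
    [FiniteDimensional F K] [Algebra.IsSeparable F K] [Fintype ι] [DecidableEq ι]
    (φ : Module.Dual F (ι → K)) :
    ∃ w : ι → K, ∀ a, φ a = ∑ j, Algebra.trace F K (w j * a j) := by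
  let e := (Algebra.traceForm F K).toDual (traceForm_nondegenerate F K)
  refine ⟨fun j => e.symm (φ ∘ₗ LinearMap.single F (fun _ => K) j), fun a => ?_⟩
  conv_lhs => rw [← Finset.univ_sum_single a, map_sum]
  refine Finset.sum_congr rfl fun j _ => ?_
  rw [← Algebra.traceForm_apply, ← LinearMap.BilinForm.toDual_def (traceForm_nondegenerate F K),
    LinearEquiv.apply_symm_apply]
  rfl

section BCH

variable {q : ℕ} {F K : Type*} [Field F] [Field K] [Fintype K] [Algebra F K]

local notation "U" => {x : K // x ^ (q + 1) = 1}

variable (q F K) in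
noncomputable def bchSyndrome (n : ℕ) : (U → F) →ₗ[F] (Fin n → K) :=
  LinearMap.pi fun j => bchMap q F K ((j : ℕ) + 1 : ℕ)

theorem bchMap_single [DecidableEq K] (i : ℤ) (u : U) :
    bchMap q F K i (Pi.single u 1) = (u : K) ^ i := by
  simp [bchMap, LinearMap.sum_apply, Pi.single_apply]

theorem bchSyndrome_single [DecidableEq K] {n : ℕ} (u : U) (j : Fin n) :
    bchSyndrome q F K n (Pi.single u 1) j = (u : K) ^ ((j : ℕ) + 1) := by
  rw [bchSyndrome, LinearMap.pi_apply, bchMap_single, zpow_natCast]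

theorem bchMap_neg [Fintype F] (hF : Fintype.card F = q) (i : ℤ) (c : U → F) :
    bchMap q F K (-i) c = bchMap q F K i c ^ q := by
  have hσ := frobeniusAlgEquivOfAlgebraic_apply_eq_pow (K := K) hF
  simp only [bchMap, LinearMap.sum_apply, LinearMap.smul_apply, LinearMap.comp_apply,
    LinearMap.proj_apply, Algebra.linearMap_apply, smul_eq_mul]
  rw [← hσ, map_sum]
  refine Finset.sum_congr rfl fun u _ => ?_
  rw [map_mul, AlgEquiv.commutes, hσ, ← zpow_natCast, ← zpow_mul, mul_comm i, zpow_mul,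
    zpow_natCast, pow_eq_inv_of_pow_succ_eq_one u.2, inv_zpow']

theorem bchCode_eq_ker_bchSyndrome [Fintype F] (hF : Fintype.card F = q) (δ : ℕ) :
    bchCode q δ F K = LinearMap.ker (bchSyndrome q F K (δ - 1)) := by
  have hmem_ker : ∀ c, c ∈ LinearMap.ker (bchSyndrome q F K (δ - 1)) ↔
      ∀ k : ℕ, 1 ≤ k → k ≤ δ - 1 → bchMap q F K k c = 0 := by
    intro c
    simp only [bchSyndrome, LinearMap.mem_ker, funext_iff, LinearMap.pi_apply, Pi.zero_apply]
    refine ⟨fun h k hk1 hk2 => ?_, fun h j => h _ (by omega) (by omega)⟩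
    simpa [Nat.sub_add_cancel hk1] using h ⟨k - 1, by omega⟩
  ext c
  simp only [bchCode, Submodule.mem_iInf, LinearMap.mem_ker, Set.mem_ofPred_eq, hmem_ker]
  refine ⟨fun h k hk1 hk2 => h k ⟨by simpa, by simp; omega⟩, fun h i ⟨hi1, hi2⟩ => ?_⟩
  obtain ⟨k, rfl | rfl⟩ := Int.eq_nat_or_neg i
  · exact h k (by simpa using hi1) (by simp at hi2; omega)
  · rw [bchMap_neg hF, h k (by simpa using hi1) (by simp at hi2; omega),
      zero_pow (hF ▸ Fintype.card_ne_zero)]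

theorem natCard_pow_succ_eq_one (hK : Fintype.card K = q ^ 2) : Nat.card U = q + 1 :=
  natCard_pow_eq_one_of_dvd_card_sub_one q.succ_pos
    ⟨q - 1, by rw [hK]; simpa using Nat.sq_sub_sq q 1⟩

theorem eq_zero_of_forall_trace_eq_zero [Fintype F] (hF : Fintype.card F = q)
    (hK : Fintype.card K = q ^ 2) {n : ℕ} (hn : 2 * n ≤ q) (w : Fin n → K)
    (h : ∀ u : U, Algebra.trace F K (∑ j, w j * (u : K) ^ ((j : ℕ) + 1)) = 0) : w = 0 := by
  have : Fintype U := Fintype.ofFinite U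
  refine eq_zero_of_forall_sum_pow_eq_zero (f := ((↑) : U → K)) Subtype.val_injective
    (by rw [← Nat.card_eq_fintype_card, natCard_pow_succ_eq_one hK]; omega)
    w (fun j => w j ^ q) fun u => ?_
  have hu : (u : K) ^ q = (u : K)⁻¹ := pow_eq_inv_of_pow_succ_eq_one u.2
  have hu0 : (u : K) ≠ 0 := ne_zero_pow q.succ_ne_zero (by rw [u.2]; exact one_ne_zero)
  set y := ∑ j, w j * (u : K) ^ ((j : ℕ) + 1)
  have hy : y + y ^ q = 0 := by
    rw [← algebraMap_trace_eq_add_pow hF hK, h u, map_zero]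
  have hyq : y ^ q = ∑ j, w j ^ q * (u : K)⁻¹ ^ ((j : ℕ) + 1) := by
    have hσ := frobeniusAlgEquivOfAlgebraic_apply_eq_pow (K := K) hF
    rw [← hσ, map_sum]
    exact Finset.sum_congr rfl fun j _ => by rw [map_mul, map_pow, hσ, hσ, hu]
  calc ∑ j : Fin n, (w j * (u : K) ^ (n + 1 + j) + w j ^ q * (u : K) ^ (n - 1 - j))
      = (u : K) ^ n * (y + y ^ q) := by
        rw [hyq, mul_add, Finset.mul_sum, Finset.mul_sum, ← Finset.sum_add_distrib]
        refine Finset.sum_congr rfl fun j _ => ?_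
        have hsplit : (u : K) ^ n = (u : K) ^ (n - 1 - j) * (u : K) ^ ((j : ℕ) + 1) := by
          rw [← pow_add]; congr 1; omega
        congr 1
        · ring
        · rw [hsplit, inv_pow]
          field_simp
    _ = 0 := by rw [hy, mul_zero]

theorem bchSyndrome_surjective [Fintype F] (hF : Fintype.card F = q)
    (hK : Fintype.card K = q ^ 2) {n : ℕ} (hn : 2 * n ≤ q) :
    Function.Surjective (bchSyndrome q F K n) := by
  classical
  rw [← LinearMap.range_eq_top, ← Submodule.dualAnnihilator_eq_bot_iff, Submodule.eq_bot_iff]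
  intro φ hφ
  obtain ⟨w, hw⟩ := φ.exists_eq_sum_trace
  have hw0 : w = 0 := eq_zero_of_forall_trace_eq_zero hF hK hn w fun u => by
    have h := (Submodule.mem_dualAnnihilator φ).mp hφ _
      (LinearMap.mem_range_self _ (Pi.single u 1))
    simpa only [hw, bchSyndrome_single, ← map_sum] using h
  ext a
  simp [hw, hw0]

theorem finrank_ker_bchSyndrome [Fintype F] (hF : Fintype.card F = q)
    (hK : Fintype.card K = q ^ 2) {n : ℕ} (hn : 2 * n ≤ q) :
    Module.finrank F (LinearMap.ker (bchSyndrome q F K n)) + 2 * n = q + 1 := by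
  have : Fintype U := Fintype.ofFinite U
  have hrank := LinearMap.finrank_range_add_finrank_ker (bchSyndrome q F K n)
  rw [LinearMap.range_eq_top.mpr (bchSyndrome_surjective hF hK hn), finrank_top,
    Module.finrank_pi_fintype, Module.finrank_fintype_fun_eq_card, ← Nat.card_eq_fintype_card,
    natCard_pow_succ_eq_one hK, finrank_eq_two_of_card hF hK] at hrank
  simp only [Finset.sum_const, Finset.card_univ, Fintype.card_fin, smul_eq_mul] at hrank
  omega

end BCH

theorem stmt_12 (p r m δ q : ℕ) (hp : p.Prime) (hr : 0 < r) (hm : 2 ≤ m)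
    (hδ : δ = p ^ r) (hq : q = δ ^ m)
    (F K : Type*) [Field F] [Fintype F] [Field K] [Fintype K] [Algebra F K]
    (hF : Fintype.card F = q) (hK : Fintype.card K = q ^ 2) :
    Module.finrank F ↥(bchCode q δ F K) = q - 2 * δ + 3 := by
  have hδ2 : 2 ≤ δ := hδ ▸ hp.two_le.trans (Nat.le_self_pow hr.ne' p)
  have hδq : 2 * δ ≤ q :=
    calc 2 * δ ≤ δ ^ 2 := by nlinarith
      _ ≤ q := hq ▸ Nat.pow_le_pow_right (by omega) hm
  have hdim := finrank_ker_bchSyndrome (K := K) hF hK (n := δ - 1) (by omega)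
  rw [bchCode_eq_ker_bchSyndrome hF]
  omega
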